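/- arXiv:1702.00796 — 3 statements merged into one kernel-verified Lean document; each statement's English description precedes it below -/
import Mathlib

section
/- Let k ≥ 2 and let M be the (N+kr)×(N+kr) matrix with the block structure: F (N×N) in the top-left, each of the k blocks in the top row equal to H, each of the k blocks in the left column equal to L, and (s,t) circulant block M_{(t−s) mod k}. Let S = I_N ⊕ R where R has (s,t) block ω^{st} I_r with ω = e^{2πi/k}. Then S⁻¹ M S = M_φ ⊕ B₁ ⊕ ⋯ ⊕ B_{k−1}, where M_φ = [F, kH; L, B₀] and B_j = Σ_{m=0}^{k−1} ω^{jm} M_m. -/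
/-!
Write `V = (ω^{st})` for the `k × k` Vandermonde matrix of the `k`-th roots of unity; it is
invertible because the nodes `ω^s` are distinct, and `S = I_N ⊕ (V ⊗ I_r)`, so `M S = S D`
suffices. Column `u` of `V` is an eigenvector of every circulant: reindexing `t = s + m` turns
`∑_t M_{t-s} ω^{tu}` into `ω^{su} B_u`. On the border, `∑_t ω^{tu}` is `k` for `u = 0` and `0`
otherwise, which gives the `kH` block, and the column of `V` indexed by `0` is all ones, which
gives the `L` block.
-/

open Matrix Finset
open scoped Kronecker

theorem sum_fin_pow_eq_ite_of_pow_eq_one {K : Type*} [Field K] [DecidableEq K] {k : ℕ} {x : K}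
    (hx : x ^ k = 1) : ∑ t : Fin k, x ^ (t : ℕ) = if x = 1 then (k : K) else 0 := by
  rw [Fin.sum_univ_eq_sum_range (x ^ ·)]
  split_ifs with h
  · simp [h]
  · rw [geom_sum_eq h, hx, sub_self, zero_div]

theorem IsPrimitiveRoot.sum_fin_pow_mul_eq_ite {K : Type*} [Field K] [DecidableEq K] {k : ℕ}
    {ζ : K} (hζ : IsPrimitiveRoot ζ k) (u : Fin k) :
    ∑ t : Fin k, ζ ^ ((t : ℕ) * u) = if (u : ℕ) = 0 then (k : K) else 0 := by
  simp_rw [mul_comm _ (u : ℕ), pow_mul]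
  rw [sum_fin_pow_eq_ite_of_pow_eq_one
    (by rw [← pow_mul, mul_comm, pow_mul, hζ.pow_eq_one, one_pow])]
  simp only [hζ.pow_eq_one_iff_dvd, Nat.dvd_iff_mod_eq_zero, Nat.mod_eq_of_lt u.isLt]

theorem IsPrimitiveRoot.det_vandermonde_pow_ne_zero {R : Type*} [CommRing R] [IsDomain R]
    {k : ℕ} {ζ : R} (hζ : IsPrimitiveRoot ζ k) :
    (vandermonde fun s : Fin k => ζ ^ (s : ℕ)).det ≠ 0 :=
  det_vandermonde_ne_zero_iff.2 fun s t h => Fin.ext (hζ.pow_inj s.isLt t.isLt h)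

theorem sum_fin_comp_sub_mul_pow_mul {R : Type*} [CommSemiring R] {k : ℕ} [NeZero k] {ζ : R}
    (hζ : ζ ^ k = 1) (f : Fin k → R) (s : Fin k) (u : ℕ) :
    ∑ t : Fin k, f (t - s) * ζ ^ ((t : ℕ) * u) =
      ζ ^ ((s : ℕ) * u) * ∑ m : Fin k, ζ ^ (u * m) * f m := by
  rw [← Equiv.sum_comp (Equiv.addLeft s), mul_sum]
  refine sum_congr rfl fun m _ => ?_
  rw [Equiv.coe_addLeft, add_sub_cancel_left, pow_eq_pow_mod _ hζ, Fin.val_add, Nat.mod_mul_mod,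
    ← pow_eq_pow_mod _ hζ]
  ring

section Kronecker

variable {α l m m' n : Type*} [Semiring α] [Fintype m] [Fintype n] [DecidableEq n]

theorem mul_kronecker_one_apply (A : Matrix l (m × n) α) (V : Matrix m m' α) (x : l) (t : m')
    (j : n) : (A * (V ⊗ₖ (1 : Matrix n n α))) x (t, j) = ∑ s, A x (s, j) * V s t := by
  simp [mul_apply, Fintype.sum_prod_type, one_apply]

theorem kronecker_one_mul_apply (V : Matrix m' m α) (A : Matrix (m × n) l α) (s : m') (i : n)
    (y : l) : ((V ⊗ₖ (1 : Matrix n n α)) * A) (s, i) y = ∑ t, V s t * A (t, i) y := by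
  simp [mul_apply, Fintype.sum_prod_type, one_apply]

end Kronecker

/-- With `S = I_N ⊕ R`, `R` the block Vandermonde matrix, we have
`S⁻¹ M S = M_φ ⊕ B₁ ⊕ ⋯ ⊕ B_{k-1}`, where `M_φ = [F, kH; L, B₀]`. -/
theorem stmt_6 (k r N : ℕ) (hk : 2 ≤ k) (ω : ℂ)
    (hω : ω = Complex.exp (2 * Real.pi * Complex.I / k))
    (F : Matrix (Fin N) (Fin N) ℂ) (H : Matrix (Fin N) (Fin r) ℂ)
    (L : Matrix (Fin r) (Fin N) ℂ)
    (Ms : Fin k → Matrix (Fin r) (Fin r) ℂ)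
    (B : Fin k → Matrix (Fin r) (Fin r) ℂ)
    (hB : ∀ j : Fin k, B j = ∑ m : Fin k, ω ^ ((j : ℕ) * (m : ℕ)) • Ms m)
    (M : Matrix (Fin N ⊕ Fin k × Fin r) (Fin N ⊕ Fin k × Fin r) ℂ)
    (hM₁ : ∀ a b : Fin N, M (Sum.inl a) (Sum.inl b) = F a b)
    (hM₂ : ∀ a : Fin N, ∀ t : Fin k, ∀ j : Fin r, M (Sum.inl a) (Sum.inr (t, j)) = H a j)
    (hM₃ : ∀ s : Fin k, ∀ i : Fin r, ∀ b : Fin N, M (Sum.inr (s, i)) (Sum.inl b) = L i b)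
    (hM₄ : ∀ s t : Fin k, ∀ i j : Fin r,
      M (Sum.inr (s, i)) (Sum.inr (t, j)) = Ms (t - s) i j)
    (S : Matrix (Fin N ⊕ Fin k × Fin r) (Fin N ⊕ Fin k × Fin r) ℂ)
    (hS₁ : ∀ a b : Fin N, S (Sum.inl a) (Sum.inl b) = if a = b then 1 else 0)
    (hS₂ : ∀ a : Fin N, ∀ p : Fin k × Fin r, S (Sum.inl a) (Sum.inr p) = 0)
    (hS₃ : ∀ p : Fin k × Fin r, ∀ b : Fin N, S (Sum.inr p) (Sum.inl b) = 0)
    (hS₄ : ∀ s t : Fin k, ∀ i j : Fin r,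
      S (Sum.inr (s, i)) (Sum.inr (t, j)) = ω ^ ((s : ℕ) * (t : ℕ)) * (if i = j then 1 else 0))
    -- `D` is the block-diagonal matrix `M_φ ⊕ B₁ ⊕ ⋯ ⊕ B_{k-1}`, where the divisor matrix
    -- `M_φ = [F, kH; L, B₀]` occupies the `Fin N` block together with the `0`-th circulant block.
    (D : Matrix (Fin N ⊕ Fin k × Fin r) (Fin N ⊕ Fin k × Fin r) ℂ)
    (hD₁ : ∀ a b : Fin N, D (Sum.inl a) (Sum.inl b) = F a b)
    (hD₂ : ∀ a : Fin N, ∀ t : Fin k, ∀ j : Fin r,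
      D (Sum.inl a) (Sum.inr (t, j)) = if (t : ℕ) = 0 then (k : ℂ) * H a j else 0)
    (hD₃ : ∀ s : Fin k, ∀ i : Fin r, ∀ b : Fin N,
      D (Sum.inr (s, i)) (Sum.inl b) = if (s : ℕ) = 0 then L i b else 0)
    (hD₄ : ∀ s t : Fin k, ∀ i j : Fin r,
      D (Sum.inr (s, i)) (Sum.inr (t, j)) = if s = t then B s i j else 0) :
    IsUnit S.det ∧ S⁻¹ * M * S = D := by
  have : NeZero k := ⟨by omega⟩
  have hζ : IsPrimitiveRoot ω k := hω ▸ Complex.isPrimitiveRoot_exp k (by omega)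
  set V := vandermonde fun s : Fin k => ω ^ (s : ℕ)
  have hS : S = fromBlocks 1 0 0 (V ⊗ₖ 1) := by
    ext (a | ⟨s, i⟩) (b | ⟨t, j⟩) <;> simp [hS₁, hS₂, hS₃, hS₄, one_apply, V, ← pow_mul]
  have hdet : IsUnit S.det := by
    rw [hS, det_fromBlocks_zero₂₁, det_kronecker, isUnit_iff_ne_zero]
    simpa using pow_ne_zero r hζ.det_vandermonde_pow_ne_zero
  have hMS : M * S = S * D := by
    rw [hS, ← M.fromBlocks_toBlocks, ← D.fromBlocks_toBlocks, fromBlocks_multiply,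
      fromBlocks_multiply]
    simp only [Matrix.mul_one, Matrix.mul_zero, Matrix.one_mul, Matrix.zero_mul, add_zero,
      zero_add]
    refine fromBlocks_inj.2 ⟨?_, ?_, ?_, ?_⟩
    · ext a b
      simp [toBlocks₁₁, hM₁, hD₁]
    · ext a ⟨u, j⟩
      simp only [mul_kronecker_one_apply, toBlocks₁₂, of_apply, hM₂, hD₂, V, vandermonde_apply,
        ← pow_mul, mul_comm (H a j), ← sum_mul, hζ.sum_fin_pow_mul_eq_ite, ite_mul, zero_mul]
    · ext ⟨s, i⟩ b
      simp [kronecker_one_mul_apply, toBlocks₂₁, hM₃, hD₃, V]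
    · ext ⟨s, i⟩ ⟨u, j⟩
      rw [mul_kronecker_one_apply, kronecker_one_mul_apply]
      simp only [toBlocks₂₂, hM₄, of_apply, vandermonde_apply, ← pow_mul, hD₄, hB,
        Matrix.sum_apply, Matrix.smul_apply, smul_eq_mul, mul_ite, mul_zero, sum_ite_eq',
        mem_univ, ↓reduceIte, V]
      exact sum_fin_comp_sub_mul_pow_mul hζ.pow_eq_one (fun m => Ms m i j) s u
  refine ⟨hdet, ?_⟩
  rw [mul_assoc, hMS, ← mul_assoc, nonsing_inv_mul S hdet, Matrix.one_mul]
end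

section
/- Let k ≥ 2, ω = e^{2πi/k}, and M₀,…,M_{k−1} be r×r complex matrices, with M the kr×kr block-circulant matrix built from them. For each j ∈ {0,…,k−1} and each row index i ∈ {1,…,r}, the Gershgorin disk of row i of B_j = Σ_{m=0}^{k−1} ω^{jm} M_m is contained in the Gershgorin disk of the corresponding row i of M; that is, |M_{ii}^{(0)} − [B_j]_{ii}| ≤ Σ_{l≠i, l in full index set} |M_{il}| − Σ_{l≠i}^r |[B_j]_{il}|, where M_{ii}^{(0)} = [M₀]_{ii} is the diagonal entry of M in that row. -/
/-!
Row `i` of `B_j` is the combination `Σ_m ω^{jm} (row i of M_m)` with weights of modulus one, the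
weight of `M₀` being `1`. So the centres differ by at most `Σ_{m ≠ 0} |[M_m]_{ii}|`, and the radius
of `B_j` is at most `Σ_m Σ_{l ≠ i} |[M_m]_{il}|`. These two bounds add up to the off-diagonal sum
of row `i` of `M`, which runs over all entries of all the blocks `M_m` except `[M₀]_{ii}`.
-/

open Matrix Finset

theorem norm_sub_sum_mul_add_sum_erase_le {R κ ι : Type*} [SeminormedRing R]
    [Fintype κ] [Fintype ι] [DecidableEq κ] [DecidableEq ι]
    (v : κ → ι → R) (c : κ → R) (hc : ∀ m, ‖c m‖ ≤ 1) {m₀ : κ} (hc₀ : c m₀ = 1) (i : ι) :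
    ‖v m₀ i - ∑ m, c m * v m i‖ + ∑ l ∈ univ.erase i, ‖∑ m, c m * v m l‖ ≤
      ∑ m, ∑ l, ‖v m l‖ - ‖v m₀ i‖ := by
  have hterm : ∀ m l, ‖c m * v m l‖ ≤ ‖v m l‖ := fun m l =>
    (norm_mul_le _ _).trans (mul_le_of_le_one_left (norm_nonneg _) (hc m))
  have hcenter : ‖v m₀ i - ∑ m, c m * v m i‖ ≤ ∑ m ∈ univ.erase m₀, ‖v m i‖ := by
    rw [← add_sum_erase _ _ (mem_univ m₀), hc₀, one_mul, sub_add_cancel_left, norm_neg]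
    exact (norm_sum_le _ _).trans (sum_le_sum fun m _ => hterm m i)
  have hradius : ∑ l ∈ univ.erase i, ‖∑ m, c m * v m l‖ ≤
      ∑ m, ∑ l ∈ univ.erase i, ‖v m l‖ := by
    rw [sum_comm (s := univ)]
    exact sum_le_sum fun l _ => (norm_sum_le _ _).trans (sum_le_sum fun m _ => hterm m l)
  have hrows : ∑ m, ∑ l ∈ univ.erase i, ‖v m l‖ = ∑ m, ∑ l, ‖v m l‖ - ∑ m, ‖v m i‖ := by
    simp only [sum_erase_eq_sub (mem_univ _), sum_sub_distrib]
  rw [sum_erase_eq_sub (mem_univ _)] at hcenter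
  linarith

theorem sum_blockCirculant_row {G ι R β : Type*} [AddGroup G] [Fintype G] [Fintype ι]
    [AddCommMonoid β] (Ms : G → Matrix ι ι R) (M : Matrix (G × ι) (G × ι) R)
    (hM : ∀ s t : G, ∀ i j : ι, M (s, i) (t, j) = Ms (t - s) i j) (f : R → β) (s : G) (i : ι) :
    ∑ p, f (M (s, i) p) = ∑ m, ∑ l, f (Ms m i l) := by
  rw [Fintype.sum_prod_type]
  simp only [hM]
  exact (Equiv.subRight s).sum_comp fun m => ∑ l, f (Ms m i l)

theorem stmt_11_general (k r : ℕ) (ω : ℂ)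
    (hω : ω = Complex.exp (2 * Real.pi * Complex.I / k))
    (Ms : Fin k → Matrix (Fin r) (Fin r) ℂ)
    (B : Fin k → Matrix (Fin r) (Fin r) ℂ)
    (hB : ∀ j : Fin k, B j = ∑ m : Fin k, ω ^ ((j : ℕ) * (m : ℕ)) • Ms m)
    (M : Matrix (Fin k × Fin r) (Fin k × Fin r) ℂ)
    (hM : ∀ s t : Fin k, ∀ i j : Fin r, M (s, i) (t, j) = Ms (t - s) i j)
    (j : Fin k) (i : Fin r) (z : Fin k) :
    ‖M (z, i) (z, i) - B j i i‖ ≤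
      (∑ p ∈ Finset.univ.erase (z, i), ‖M (z, i) p‖) -
        ∑ l ∈ Finset.univ.erase i, ‖B j i l‖ := by
  have : NeZero k := NeZero.of_pos z.pos
  have hω_norm : ‖ω‖ = 1 :=
    hω ▸ (Complex.isPrimitiveRoot_exp k (NeZero.ne k)).norm'_eq_one (NeZero.ne k)
  have hB_row : ∀ l, B j i l = ∑ m : Fin k, ω ^ ((j : ℕ) * (m : ℕ)) * Ms m i l := by
    simp [hB, Matrix.sum_apply]
  have hM_diag : M (z, i) (z, i) = Ms 0 i i := by rw [hM, sub_self]
  rw [sum_erase_eq_sub (mem_univ _), sum_blockCirculant_row Ms M hM (‖·‖), hM_diag]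
  simp only [hB_row]
  have := norm_sub_sum_mul_add_sum_erase_le (fun m => Ms m i) (fun m => ω ^ ((j : ℕ) * (m : ℕ)))
    (fun m => by rw [norm_pow, hω_norm, one_pow]) (m₀ := 0) (by simp) i
  linarith

/-- Each Gershgorin disk of `B_j = Σ_m ω^{jm} M_m` is contained in the corresponding
Gershgorin disk of the block-circulant matrix `M`: the distance between the centers is
at most the difference of the radii. -/
theorem stmt_11 (k r : ℕ) (hk : 2 ≤ k) (ω : ℂ)
    (hω : ω = Complex.exp (2 * Real.pi * Complex.I / k))
    (Ms : Fin k → Matrix (Fin r) (Fin r) ℂ)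
    (B : Fin k → Matrix (Fin r) (Fin r) ℂ)
    (hB : ∀ j : Fin k, B j = ∑ m : Fin k, ω ^ ((j : ℕ) * (m : ℕ)) • Ms m)
    (M : Matrix (Fin k × Fin r) (Fin k × Fin r) ℂ)
    (hM : ∀ s t : Fin k, ∀ i j : Fin r, M (s, i) (t, j) = Ms (t - s) i j)
    (j : Fin k) (i : Fin r) (z : Fin k) (hz : (z : ℕ) = 0) :
    ‖M (z, i) (z, i) - B j i i‖ ≤
      (∑ p ∈ Finset.univ.erase (z, i), ‖M (z, i) p‖) -
        ∑ l ∈ Finset.univ.erase i, ‖B j i l‖ :=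
  stmt_11_general k r ω hω Ms B hB M hM j i z
end

section
/- Let k ≥ 2, ω = e^{2πi/k}, and M₀,…,M_{k−1} be r×r complex matrices with M the associated kr×kr block-circulant matrix. Then the Gershgorin region of the block-diagonal matrix B₀ ⊕ B₁ ⊕ ⋯ ⊕ B_{k−1} (with B_j = Σ_m ω^{jm} M_m) is contained in the Gershgorin region of M. -/
/-!
Write `B_s = ∑ₘ ωˢᵐ Mₘ`. The diagonal entry of `M` in row `(s, i)` is `(M₀)ᵢᵢ`, and its
Gershgorin radius is `∑ₘ ∑ⱼ |(Mₘ)ᵢⱼ| - |(M₀)ᵢᵢ|`, because each block row of `M` runs once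
through all the `Mₘ`. Since `|ωˢᵐ| = 1` and `ω⁰ = 1`, the triangle inequality gives
`|(B_s)ᵢⱼ| ≤ ∑ₘ |(Mₘ)ᵢⱼ|` and `|(B_s)ᵢᵢ - (M₀)ᵢᵢ| ≤ ∑_{m ≠ 0} |(Mₘ)ᵢᵢ|`, so the Gershgorin disk
of `B_s` in row `i` lies inside that of `M` in row `(s, i)`.
-/

open Matrix Finset

variable {R : Type*} [NormedRing R] {n : Type*}

section LinearCombination

variable {ι : Type*} [Fintype ι] {c : ι → R} {N : ι → Matrix n n R}

theorem norm_sum_smul_apply_le (hc : ∀ m, ‖c m‖ ≤ 1) (i j : n) :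
    ‖(∑ m, c m • N m) i j‖ ≤ ∑ m, ‖N m i j‖ := by
  rw [Matrix.sum_apply]
  refine (norm_sum_le _ _).trans (sum_le_sum fun m _ => ?_)
  exact (norm_mul_le _ _).trans (mul_le_of_le_one_left (norm_nonneg _) (hc m))

theorem norm_sum_smul_apply_sub_le [DecidableEq ι] {m₀ : ι} (hc : ∀ m, ‖c m‖ ≤ 1)
    (hc₀ : c m₀ = 1) (i j : n) :
    ‖(∑ m, c m • N m) i j - N m₀ i j‖ ≤ ∑ m, ‖N m i j‖ - ‖N m₀ i j‖ := by
  have hsplit : (∑ m, c m • N m) i j - N m₀ i j = ∑ m ∈ univ.erase m₀, c m * N m i j := by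
    rw [Matrix.sum_apply, ← add_sum_erase _ _ (mem_univ m₀)]
    simp [hc₀]
  rw [hsplit, ← sum_erase_eq_sub (mem_univ m₀)]
  refine (norm_sum_le _ _).trans (sum_le_sum fun m _ => ?_)
  exact (norm_mul_le _ _).trans (mul_le_of_le_one_left (norm_nonneg _) (hc m))

end LinearCombination

section Gershgorin

variable [Fintype n] [DecidableEq n]

def gershgorinRadius (A : Matrix n n R) (p : n) : ℝ :=
  ∑ q ∈ univ.erase p, ‖A p q‖

theorem gershgorinRadius_eq_sub (A : Matrix n n R) (p : n) :
    gershgorinRadius A p = ∑ q, ‖A p q‖ - ‖A p p‖ :=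
  sum_erase_eq_sub (mem_univ p)

theorem norm_sub_le_of_norm_sub_sum_smul_le {ι : Type*} [Fintype ι] [DecidableEq ι]
    {c : ι → R} {N : ι → Matrix n n R} {m₀ : ι} (hc : ∀ m, ‖c m‖ ≤ 1) (hc₀ : c m₀ = 1)
    {z : R} {i : n}
    (hz : ‖z - (∑ m, c m • N m) i i‖ ≤ gershgorinRadius (∑ m, c m • N m) i) :
    ‖z - N m₀ i i‖ ≤ ∑ m, ∑ j, ‖N m i j‖ - ‖N m₀ i i‖ := by
  set A := ∑ m, c m • N m
  have hrow : gershgorinRadius A i ≤ ∑ j ∈ univ.erase i, ∑ m, ‖N m i j‖ :=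
    sum_le_sum fun j _ => norm_sum_smul_apply_le hc i j
  calc ‖z - N m₀ i i‖
      ≤ ‖z - A i i‖ + ‖A i i - N m₀ i i‖ := norm_sub_le_norm_sub_add_norm_sub _ _ _
    _ ≤ ∑ j ∈ univ.erase i, ∑ m, ‖N m i j‖ + (∑ m, ‖N m i i‖ - ‖N m₀ i i‖) :=
        add_le_add (hz.trans hrow) (norm_sum_smul_apply_sub_le hc hc₀ i i)
    _ = ∑ j, ∑ m, ‖N m i j‖ - ‖N m₀ i i‖ := by
        rw [sum_erase_eq_sub (mem_univ i)]; ring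
    _ = ∑ m, ∑ j, ‖N m i j‖ - ‖N m₀ i i‖ := by rw [sum_comm]

section Blocks

variable {G : Type*} [Fintype G] [DecidableEq G]

theorem gershgorinRadius_of_blockDiagonal {B : G → Matrix n n R} {D : Matrix (G × n) (G × n) R}
    (hD : ∀ s t i j, D (s, i) (t, j) = if s = t then B s i j else 0) (s : G) (i : n) :
    gershgorinRadius D (s, i) = gershgorinRadius (B s) i := by
  simp only [gershgorinRadius_eq_sub, Fintype.sum_prod_type, hD, apply_ite norm, norm_zero,
    sum_ite_irrel, sum_const_zero, sum_ite_eq, mem_univ, if_true]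

theorem gershgorinRadius_of_blockCirculant [AddGroup G] {Ms : G → Matrix n n R}
    {M : Matrix (G × n) (G × n) R} (hM : ∀ s t i j, M (s, i) (t, j) = Ms (t - s) i j)
    (s : G) (i : n) :
    gershgorinRadius M (s, i) = ∑ m, ∑ j, ‖Ms m i j‖ - ‖Ms 0 i i‖ := by
  rw [gershgorinRadius_eq_sub, Fintype.sum_prod_type, hM, sub_self]
  simp only [hM]
  congr 1
  exact Fintype.sum_equiv (Equiv.subRight s) _ _ fun _ => rfl

end Blocks

end Gershgorin

theorem norm_exp_two_pi_I_div_pow (k n : ℕ) :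
    ‖Complex.exp (2 * Real.pi * Complex.I / k) ^ n‖ = 1 := by
  rw [norm_pow, Complex.norm_exp]
  simp [Complex.div_re]

theorem stmt_12_general (k r : ℕ) (ω : ℂ)
    (hω : ω = Complex.exp (2 * Real.pi * Complex.I / k))
    (Ms : Fin k → Matrix (Fin r) (Fin r) ℂ)
    (B : Fin k → Matrix (Fin r) (Fin r) ℂ)
    (hB : ∀ j : Fin k, B j = ∑ m : Fin k, ω ^ ((j : ℕ) * (m : ℕ)) • Ms m)
    (M : Matrix (Fin k × Fin r) (Fin k × Fin r) ℂ)
    (hM : ∀ s t : Fin k, ∀ i j : Fin r, M (s, i) (t, j) = Ms (t - s) i j)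
    (D : Matrix (Fin k × Fin r) (Fin k × Fin r) ℂ)
    (hD : ∀ s t : Fin k, ∀ i j : Fin r, D (s, i) (t, j) = if s = t then B s i j else 0)
    (z : ℂ)
    (hz : ∃ p : Fin k × Fin r,
      ‖z - D p p‖ ≤ ∑ q ∈ Finset.univ.erase p, ‖D p q‖) :
    ∃ p : Fin k × Fin r,
      ‖z - M p p‖ ≤ ∑ q ∈ Finset.univ.erase p, ‖M p q‖ := by
  obtain ⟨⟨s, i⟩, hp⟩ := hz
  have : NeZero k := ⟨s.pos.ne'⟩
  refine ⟨(s, i), ?_⟩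
  change _ ≤ gershgorinRadius M (s, i)
  change _ ≤ gershgorinRadius D (s, i) at hp
  rw [gershgorinRadius_of_blockDiagonal hD, hD, if_pos rfl, hB] at hp
  rw [gershgorinRadius_of_blockCirculant hM, hM, sub_self]
  refine norm_sub_le_of_norm_sub_sum_smul_le (fun m => ?_) (by simp) hp
  rw [hω, norm_exp_two_pi_I_div_pow]

/-- The Gershgorin region of the block-diagonal matrix `B₀ ⊕ ⋯ ⊕ B_{k-1}` is contained in
the Gershgorin region of the block-circulant matrix `M`. -/
theorem stmt_12 (k r : ℕ) (hk : 2 ≤ k) (ω : ℂ)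
    (hω : ω = Complex.exp (2 * Real.pi * Complex.I / k))
    (Ms : Fin k → Matrix (Fin r) (Fin r) ℂ)
    (B : Fin k → Matrix (Fin r) (Fin r) ℂ)
    (hB : ∀ j : Fin k, B j = ∑ m : Fin k, ω ^ ((j : ℕ) * (m : ℕ)) • Ms m)
    (M : Matrix (Fin k × Fin r) (Fin k × Fin r) ℂ)
    (hM : ∀ s t : Fin k, ∀ i j : Fin r, M (s, i) (t, j) = Ms (t - s) i j)
    (D : Matrix (Fin k × Fin r) (Fin k × Fin r) ℂ)
    (hD : ∀ s t : Fin k, ∀ i j : Fin r, D (s, i) (t, j) = if s = t then B s i j else 0)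
    (z : ℂ)
    (hz : ∃ p : Fin k × Fin r,
      ‖z - D p p‖ ≤ ∑ q ∈ Finset.univ.erase p, ‖D p q‖) :
    ∃ p : Fin k × Fin r,
      ‖z - M p p‖ ≤ ∑ q ∈ Finset.univ.erase p, ‖M p q‖ :=
  stmt_12_general k r ω hω Ms B hB M hM D hD z hz
end
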